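/- For every unit vector n in R^2, every delta > 0 and every xi in Z^2 with xi ≠ 0, the imaginary part of the Fourier symbol satisfies Im(lambda_delta^n(xi)) = Lambda_delta(|xi|) * xi/|xi|, where Lambda_delta(|xi|) := 4 Int_{ s in R^2 : s_1 >= 0, s_2 >= 0 } w_delta(|s|) (s_1/|s|) sin(|xi| s_1) ds. In particular Im(lambda_delta^n(xi)) does not depend on n. -/

import Mathlib

open MeasureTheory Real Set
open scoped BigOperators

noncomputable section

/-- The scaled kernel `w_δ(r) = δ^{-3} w(r/δ)` (dimension 2). -/
def wS (w : ℝ → ℝ) (δ r : ℝ) : ℝ := w (r / δ) / δ ^ 3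

/-- The half space `H_n = {z : z ⬝ n ≥ 0}`. -/
def halfSp (n : EuclideanSpace ℝ (Fin 2)) : Set (EuclideanSpace ℝ (Fin 2)) :=
  {z | 0 ≤ ∑ i, z i * n i}

/-- `i`-th component of the imaginary part of the Fourier symbol:
`Im λ_δ^n(ξ) = 2 ∫_{H_n} w_δ(|s|) (s/|s|) sin(ξ·s) ds`. -/
def symbIm (w : ℝ → ℝ) (δ : ℝ) (n : EuclideanSpace ℝ (Fin 2)) (ξ : Fin 2 → ℤ) (i : Fin 2) : ℝ :=
  2 * ∫ s in halfSp n, wS w δ ‖s‖ * s i * Real.sin (∑ j, (ξ j : ℝ) * s j) / ‖s‖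

/-- The closed first quadrant `{s : s₁ ≥ 0, s₂ ≥ 0}`. -/
def quadrant : Set (EuclideanSpace ℝ (Fin 2)) := {s | 0 ≤ s 0 ∧ 0 ≤ s 1}

/-- `Λ_δ(|ξ|) = 4 ∫_{s₁,s₂ ≥ 0} w_δ(|s|) (s₁/|s|) sin(|ξ| s₁) ds`. -/
def bigLambda (w : ℝ → ℝ) (δ : ℝ) (r : ℝ) : ℝ :=
  4 * ∫ s in quadrant, wS w δ ‖s‖ * s 0 * Real.sin (r * s 0) / ‖s‖

/-! ### Auxiliary material -/

local notation "E2" => EuclideanSpace ℝ (Fin 2)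

/-- The map given by a 2×2 matrix acting on `E2`. -/
def om (p q u v : ℝ) : E2 → E2 :=
  fun s => (WithLp.equiv 2 (Fin 2 → ℝ)).symm ![p * s 0 + q * s 1, u * s 0 + v * s 1]

@[simp] lemma om_apply0 (p q u v : ℝ) (s : E2) : om p q u v s 0 = p * s 0 + q * s 1 := rfl
@[simp] lemma om_apply1 (p q u v : ℝ) (s : E2) : om p q u v s 1 = u * s 0 + v * s 1 := rfl

lemma E2ext {x y : E2} (h0 : x 0 = y 0) (h1 : x 1 = y 1) : x = y := by
  apply PiLp.ext; intro i; fin_cases i <;> assumption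

/-- Orthogonal 2×2 matrices give linear isometry equivalences of `E2`. -/
def oiso (p q u v : ℝ) (h1 : p^2 + u^2 = 1) (h2 : q^2 + v^2 = 1) (h3 : p*q + u*v = 0)
    (h1' : p^2 + q^2 = 1) (h2' : u^2 + v^2 = 1) (h3' : p*u + q*v = 0) :
    E2 ≃ₗᵢ[ℝ] E2 where
  toFun := om p q u v
  invFun := om p u q v
  map_add' x y := by
    apply E2ext <;> simp [PiLp.add_apply] <;> ring
  map_smul' c x := by
    apply E2ext <;> simp [PiLp.smul_apply, smul_eq_mul] <;> ring
  left_inv s := by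
    apply E2ext <;> simp <;> ring_nf
    · linear_combination s 0 * h1 + s 1 * h3
    · linear_combination s 0 * h3 + s 1 * h2
  right_inv s := by
    apply E2ext <;> simp <;> ring_nf
    · linear_combination s 0 * h1' + s 1 * h3'
    · linear_combination s 0 * h3' + s 1 * h2'
  norm_map' s := by
    rw [EuclideanSpace.norm_eq, EuclideanSpace.norm_eq]
    congr 1
    simp [Fin.sum_univ_two, Real.norm_eq_abs, sq_abs]
    linear_combination (s 0)^2 * h1 + (s 1)^2 * h2 + 2 * s 0 * s 1 * h3

@[simp] lemma oiso_apply (p q u v : ℝ) (h1 h2 h3 h1' h2' h3') (s : E2) :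
    oiso p q u v h1 h2 h3 h1' h2' h3' s = om p q u v s := rfl

/-- Integral substitution along a linear isometry equivalence, set version. -/
lemma transfer_set (f : E2 ≃ₗᵢ[ℝ] E2) (g : E2 → ℝ) (B : Set E2)
    (hgf : ∀ s, g (f s) = g s) : ∫ s in f ⁻¹' B, g s = ∫ s in B, g s := by
  have h := (f.measurePreserving).setIntegral_preimage_emb
    f.toMeasurableEquiv.measurableEmbedding g B
  simpa [hgf] using h

/-- Integral substitution along a linear isometry equivalence. -/
lemma transfer_full (f : E2 ≃ₗᵢ[ℝ] E2) (g : E2 → ℝ) :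
    (∫ s, g (f s)) = ∫ s, g s :=
  (f.measurePreserving).integral_comp f.toMeasurableEquiv.measurableEmbedding g

/-- The linear functional `z ↦ c0 z₀ + c1 z₁` on `E2`. -/
def lfun (c0 c1 : ℝ) : E2 →ₗ[ℝ] ℝ where
  toFun z := c0 * z 0 + c1 * z 1
  map_add' x y := by simp [PiLp.add_apply]; ring
  map_smul' c x := by simp [PiLp.smul_apply, smul_eq_mul]; ring

/-- Lines through the origin are null. -/
lemma null_line (c0 c1 : ℝ) (h : c0 ≠ 0 ∨ c1 ≠ 0) :
    volume {z : E2 | c0 * z 0 + c1 * z 1 = 0} = 0 := by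
  have hset : {z : E2 | c0 * z 0 + c1 * z 1 = 0} = (LinearMap.ker (lfun c0 c1) : Set E2) := by
    ext z; simp [lfun, LinearMap.mem_ker]
  rw [hset]
  apply Measure.addHaar_submodule
  intro htop
  have hz : ((WithLp.equiv 2 (Fin 2 → ℝ)).symm ![c0, c1] : E2) ∈ LinearMap.ker (lfun c0 c1) := by
    rw [htop]; trivial
  have hzero : c0 * c0 + c1 * c1 = 0 := by
    simpa [lfun, LinearMap.mem_ker] using hz
  rcases h with h | h <;>
    nlinarith [mul_self_pos.mpr h, mul_self_nonneg c0, mul_self_nonneg c1]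

/-- Splitting an integral over a union with null overlap. -/
lemma split_lemma {g : E2 → ℝ} {A B : Set E2} (hB : MeasurableSet B)
    (h0 : volume (A ∩ B) = 0) (hgA : IntegrableOn g A) (hgB : IntegrableOn g B) :
    ∫ s in A ∪ B, g s = (∫ s in A, g s) + ∫ s in B, g s := by
  have hAe : (A : Set E2) =ᵐ[volume] (A \ B : Set E2) := by
    rw [MeasureTheory.ae_eq_set]
    constructor
    · refine measure_mono_null ?_ h0
      intro x hx
      exact ⟨hx.1, by by_contra hB'; exact hx.2 ⟨hx.1, hB'⟩⟩
    · have h' : (A \ B) \ A = ∅ := by ext x; simp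
      simp [h']
  have h1 : ∫ s in A, g s = ∫ s in A \ B, g s := setIntegral_congr_set hAe
  have h2 : (A \ B) ∪ B = A ∪ B := diff_union_self
  rw [← h2, setIntegral_union disjoint_sdiff_left hB (hgA.mono_set diff_subset) hgB, ← h1]

lemma abs_coord_le (x : E2) (i : Fin 2) : |x i| ≤ ‖x‖ := by
  rw [EuclideanSpace.norm_eq]
  have h : |x i| ^ 2 ≤ ∑ j, ‖x j‖ ^ 2 := by
    rw [Fin.sum_univ_two]
    fin_cases i <;> simp [Real.norm_eq_abs, sq_abs] <;> positivity
  calc |x i| = Real.sqrt (|x i| ^ 2) := by rw [Real.sqrt_sq (abs_nonneg _)]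
  _ ≤ _ := Real.sqrt_le_sqrt h

lemma mom_integrable (w : ℝ → ℝ)
    (hmom : (∫ x : E2, w ‖x‖ * ‖x‖) = 2) :
    Integrable (fun x : E2 => w ‖x‖ * ‖x‖) := by
  by_contra h
  rw [integral_undef h] at hmom
  norm_num at hmom

lemma smom_integrable (w : ℝ → ℝ) {δ : ℝ} (hδ : 0 < δ)
    (hmom : (∫ x : E2, w ‖x‖ * ‖x‖) = 2) :
    Integrable (fun s : E2 => wS w δ ‖s‖ * ‖s‖) := by
  have h1 : Integrable (fun s : E2 => (fun x : E2 => w ‖x‖ * ‖x‖) (δ⁻¹ • s)) :=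
    (mom_integrable w hmom).comp_smul (inv_ne_zero hδ.ne')
  have h2 := h1.const_mul (δ ^ 2)⁻¹
  have heq : (fun s : E2 => wS w δ ‖s‖ * ‖s‖)
      = fun s : E2 => (δ ^ 2)⁻¹ * ((fun x : E2 => w ‖x‖ * ‖x‖) (δ⁻¹ • s)) := by
    funext s
    have hns : ‖δ⁻¹ • s‖ = ‖s‖ / δ := by
      rw [norm_smul, Real.norm_eq_abs, abs_inv, abs_of_pos hδ, inv_mul_eq_div]
    simp only [hns, wS]
    simp only [div_eq_mul_inv]
    ring
  rw [heq]
  exact h2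

lemma integrand_integrable (w : ℝ → ℝ) (hwmeas : Measurable w) (hwnn : ∀ r, 0 ≤ w r)
    {δ : ℝ} (hδ : 0 < δ) (hmom : (∫ x : E2, w ‖x‖ * ‖x‖) = 2)
    (φ : E2 → ℝ) (hφm : Measurable φ) {K : ℝ}
    (hφb : ∀ s, |φ s| ≤ K * ‖s‖) (i : Fin 2) :
    Integrable (fun s : E2 => wS w δ ‖s‖ * s i * φ s / ‖s‖) := by
  have hwSm : Measurable (fun s : E2 => wS w δ ‖s‖) := by
    have h' : Measurable (fun s : E2 => ‖s‖ / δ) := measurable_norm.div_const δ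
    exact (hwmeas.comp h').div_const _
  have hcoord : Measurable (fun s : E2 => s i) :=
    (EuclideanSpace.proj i).continuous.measurable
  have hm : AEStronglyMeasurable (fun s : E2 => wS w δ ‖s‖ * s i * φ s / ‖s‖) volume :=
    (((hwSm.mul hcoord).mul hφm).div measurable_norm).aestronglyMeasurable
  refine Integrable.mono' (((smom_integrable w hδ hmom)).const_mul K) hm ?_
  refine Filter.Eventually.of_forall (fun s => ?_)
  have hwSnn : 0 ≤ wS w δ ‖s‖ := by
    have h1 := hwnn (‖s‖ / δ)
    have h2 : (0:ℝ) ≤ w (‖s‖/δ) / δ ^ 3 := div_nonneg h1 (by positivity)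
    simpa [wS] using h2
  rcases eq_or_lt_of_le (norm_nonneg s) with h0 | h0
  · have hs0 : s = 0 := by rw [← norm_eq_zero]; exact h0.symm
    simp [hs0]
  · rw [Real.norm_eq_abs, abs_div, abs_mul, abs_mul, abs_of_nonneg hwSnn, abs_norm]
    calc wS w δ ‖s‖ * |s i| * |φ s| / ‖s‖
        ≤ wS w δ ‖s‖ * ‖s‖ * (K * ‖s‖) / ‖s‖ := by
          gcongr
          · exact abs_coord_le s i
          · exact hφb s
    _ = K * (wS w δ ‖s‖ * ‖s‖) := by field_simp

set_option maxHeartbeats 2000000 in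
/-- `Im(λ_δ^n(ξ)) = Λ_δ(|ξ|) ξ/|ξ|`, independently of `n`. -/
theorem symbIm_eq
    (w : ℝ → ℝ) (hwmeas : Measurable w) (hwnn : ∀ r, 0 ≤ w r)
    (hwsupp : ∀ r, 1 < r → w r = 0)
    (hmom : (∫ x : EuclideanSpace ℝ (Fin 2), w ‖x‖ * ‖x‖) = 2)
    (n : EuclideanSpace ℝ (Fin 2)) (hn : ‖n‖ = 1)
    (δ : ℝ) (hδ : 0 < δ) (ξ : Fin 2 → ℤ) (hξ : ξ ≠ 0) :
    ∀ i, symbIm w δ n ξ i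
      = bigLambda w δ (Real.sqrt (∑ j, ((ξ j : ℝ)) ^ 2)) * (ξ i : ℝ)
          / Real.sqrt (∑ j, ((ξ j : ℝ)) ^ 2) := by
  intro i
  classical
  set r : ℝ := Real.sqrt (∑ j, ((ξ j : ℝ)) ^ 2) with hrdef
  have hsum : (∑ j, ((ξ j : ℝ)) ^ 2) = (ξ 0 : ℝ)^2 + (ξ 1 : ℝ)^2 := Fin.sum_univ_two _
  have hξne : (ξ 0 : ℝ) ≠ 0 ∨ (ξ 1 : ℝ) ≠ 0 := by
    by_contra h
    push_neg at h
    apply hξ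
    funext j
    fin_cases j
    · exact_mod_cast h.1
    · exact_mod_cast h.2
  have hsumpos : 0 < (∑ j, ((ξ j : ℝ)) ^ 2) := by
    rw [hsum]
    rcases hξne with h | h
    · have h0 : 0 < (ξ 0:ℝ)^2 := by positivity
      nlinarith [sq_nonneg ((ξ 1:ℝ))]
    · have h0 : 0 < (ξ 1:ℝ)^2 := by positivity
      nlinarith [sq_nonneg ((ξ 0:ℝ))]
  have hrpos : 0 < r := Real.sqrt_pos.mpr hsumpos
  have hr2 : r ^ 2 = (ξ 0:ℝ)^2 + (ξ 1:ℝ)^2 := by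
    rw [hrdef, Real.sq_sqrt hsumpos.le, hsum]
  set a : ℝ := (ξ 0 : ℝ) / r with hadef
  set b : ℝ := (ξ 1 : ℝ) / r with hbdef
  have hab : a^2 + b^2 = 1 := by
    rw [hadef, hbdef]
    field_simp
    linarith [hr2]
  -- the three isometries
  set R : E2 ≃ₗᵢ[ℝ] E2 := oiso a (-b) b a
    (by linarith [hab]) (by nlinarith [hab]) (by ring)
    (by nlinarith [hab]) (by nlinarith [hab]) (by ring) with hRdef
  set refl1 : E2 ≃ₗᵢ[ℝ] E2 := oiso (-1) 0 0 1
    (by norm_num) (by norm_num) (by norm_num) (by norm_num) (by norm_num) (by norm_num)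
    with hrefl1
  set refl2 : E2 ≃ₗᵢ[ℝ] E2 := oiso 1 0 0 (-1)
    (by norm_num) (by norm_num) (by norm_num) (by norm_num) (by norm_num) (by norm_num)
    with hrefl2
  obtain ⟨ci, hRi⟩ : ∃ c : ℝ, ∀ s : E2, (R s) i = (ξ i : ℝ)/r * s 0 + c * s 1 := by
    fin_cases i
    · refine ⟨-b, fun s => ?_⟩
      rw [hRdef]
      show om a (-b) b a s 0 = (ξ 0 : ℝ)/r * s 0 + -b * s 1
      rw [om_apply0, hadef]
    · refine ⟨a, fun s => ?_⟩
      rw [hRdef]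
      show om a (-b) b a s 1 = (ξ 1 : ℝ)/r * s 0 + a * s 1
      rw [om_apply1, hbdef]
  have harg : ∀ s : E2, ∑ j, (ξ j:ℝ) * (R s) j = r * s 0 := by
    intro s
    rw [Fin.sum_univ_two, hRdef]
    simp only [oiso_apply, om_apply0, om_apply1]
    rw [hadef, hbdef]
    field_simp
    linear_combination (-(s 0)) * hr2
  -- integrands
  set g : E2 → ℝ := fun s => wS w δ ‖s‖ * s i * Real.sin (∑ j, (ξ j : ℝ) * s j) / ‖s‖ with hg
  set h0f : E2 → ℝ := fun s => wS w δ ‖s‖ * s 0 * Real.sin (r * s 0) / ‖s‖ with hh0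
  set h1f : E2 → ℝ := fun s => wS w δ ‖s‖ * s 1 * Real.sin (r * s 0) / ‖s‖ with hh1
  clear_value R refl1 refl2 g h0f h1f
  -- integrability
  have hcoord : ∀ j : Fin 2, Measurable fun s : E2 => s j := fun j =>
    (EuclideanSpace.proj j).continuous.measurable
  have hsin1 : Measurable fun s : E2 => Real.sin (∑ j, (ξ j:ℝ) * s j) := by
    apply Real.measurable_sin.comp
    exact Finset.measurable_sum _ (fun j _ => (hcoord j).const_mul _)
  have hb1 : ∀ s : E2, |Real.sin (∑ j, (ξ j:ℝ) * s j)| ≤ (|(ξ 0:ℝ)| + |(ξ 1:ℝ)|) * ‖s‖ := by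
    intro s
    calc |Real.sin (∑ j, (ξ j:ℝ) * s j)| ≤ |∑ j, (ξ j:ℝ) * s j| := Real.abs_sin_le_abs
    _ ≤ |(ξ 0:ℝ) * s 0| + |(ξ 1:ℝ) * s 1| := by rw [Fin.sum_univ_two]; exact abs_add_le _ _
    _ ≤ (|(ξ 0:ℝ)| + |(ξ 1:ℝ)|) * ‖s‖ := by
        rw [abs_mul, abs_mul]
        have hc0 := abs_coord_le s 0
        have hc1 := abs_coord_le s 1
        nlinarith [abs_nonneg ((ξ 0:ℝ)), abs_nonneg ((ξ 1:ℝ)), abs_nonneg (s 0),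
          abs_nonneg (s 1), norm_nonneg s]
  have int_g : Integrable g := by
    rw [hg]; exact integrand_integrable w hwmeas hwnn hδ hmom _ hsin1 hb1 i
  have hsin2 : Measurable fun s : E2 => Real.sin (r * s 0) :=
    Real.measurable_sin.comp ((hcoord 0).const_mul _)
  have hb2 : ∀ s : E2, |Real.sin (r * s 0)| ≤ r * ‖s‖ := by
    intro s
    calc |Real.sin (r * s 0)| ≤ |r * s 0| := Real.abs_sin_le_abs
    _ = r * |s 0| := by rw [abs_mul, abs_of_pos hrpos]
    _ ≤ r * ‖s‖ := by have := abs_coord_le s 0; nlinarith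
  have int_h0 : Integrable h0f := by
    rw [hh0]; exact integrand_integrable w hwmeas hwnn hδ hmom _ hsin2 hb2 0
  have int_h1 : Integrable h1f := by
    rw [hh1]; exact integrand_integrable w hwmeas hwnn hδ hmom _ hsin2 hb2 1
  -- Step 1 : the half-space integral is half of the full integral
  set negE : E2 ≃ₗᵢ[ℝ] E2 := oiso (-1) 0 0 (-1)
    (by norm_num) (by norm_num) (by norm_num) (by norm_num) (by norm_num) (by norm_num)
    with hnegEdef
  clear_value negE
  have hnfun_m : Measurable fun z : E2 => ∑ j, z j * n j :=
    Finset.measurable_sum _ (fun j _ => (hcoord j).mul_const _)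
  have hBmeas : MeasurableSet {z : E2 | ∑ j, z j * n j ≤ 0} :=
    measurableSet_le hnfun_m measurable_const
  have hpreB : negE ⁻¹' (halfSp n)
      = {z : E2 | ∑ j, z j * n j ≤ 0} := by
    ext z
    simp only [Set.mem_preimage, halfSp, Set.mem_setOf_eq, hnegEdef, oiso_apply]
    have hs : ∑ j, (om (-1) 0 0 (-1) z) j * n j = -∑ j, z j * n j := by
      rw [Fin.sum_univ_two, Fin.sum_univ_two, om_apply0, om_apply1]
      ring
    rw [hs]
    constructor <;> intro h <;> linarith
  have hgneg : ∀ s, g (negE s) = g s := by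
    intro s
    simp only [hg, hnegEdef, oiso_apply, LinearIsometryEquiv.norm_map]
    have hno : ‖om (-1) 0 0 (-1) s‖ = ‖s‖ := by
      rw [show om (-1) 0 0 (-1) s = negE s by rw [hnegEdef]; rfl]
      exact negE.norm_map s
    have h1 : ∑ j, (ξ j:ℝ) * (om (-1) 0 0 (-1) s) j = -∑ j, (ξ j:ℝ) * s j := by
      rw [Fin.sum_univ_two, Fin.sum_univ_two, om_apply0, om_apply1]
      ring
    have h2 : ∀ j : Fin 2, (om (-1) 0 0 (-1) s) j = -(s j) := by
      intro j
      fin_cases j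
      · show om (-1) 0 0 (-1) s 0 = -(s 0)
        rw [om_apply0]; ring
      · show om (-1) 0 0 (-1) s 1 = -(s 1)
        rw [om_apply1]; ring
    rw [hno, h1, h2 i, Real.sin_neg]
    ring
  have hnln : volume ((halfSp n) ∩ {z : E2 | ∑ j, z j * n j ≤ 0}) = 0 := by
    refine measure_mono_null ?_ (null_line (n 0) (n 1) ?_)
    · intro z hz
      have h1 : (0:ℝ) ≤ ∑ j, z j * n j := hz.1
      have h2 : ∑ j, z j * n j ≤ 0 := hz.2
      have h3 : ∑ j, z j * n j = 0 := le_antisymm h2 h1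
      rw [Fin.sum_univ_two] at h3
      show n 0 * z 0 + n 1 * z 1 = 0
      linarith
    · by_contra hcon
      push_neg at hcon
      have hzero : ‖n‖ = 0 := by
        rw [EuclideanSpace.norm_eq, Fin.sum_univ_two, hcon.1, hcon.2]
        simp
      rw [hn] at hzero
      norm_num at hzero
  have hU : halfSp n ∪ {z : E2 | ∑ j, z j * n j ≤ 0} = Set.univ := by
    ext z
    simp only [halfSp, Set.mem_union, Set.mem_setOf_eq, Set.mem_univ, iff_true]
    exact (le_total 0 (∑ j, z j * n j)).imp id id
  have hsplit1 : ∫ s, g s = (∫ s in halfSp n, g s)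
      + ∫ s in {z : E2 | ∑ j, z j * n j ≤ 0}, g s := by
    rw [← setIntegral_univ (f := g), ← hU]
    exact split_lemma hBmeas hnln int_g.integrableOn int_g.integrableOn
  have hBeqA : ∫ s in {z : E2 | ∑ j, z j * n j ≤ 0}, g s = ∫ s in halfSp n, g s := by
    rw [← hpreB]
    exact transfer_set _ g _ hgneg
  have hhalf : ∫ s in halfSp n, g s = (∫ s, g s) / 2 := by
    rw [hBeqA] at hsplit1
    linarith
  -- Step 2 : rotation
  have hgR : ∀ s : E2, g (R s) = (ξ i:ℝ)/r * h0f s + ci * h1f s := by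
    intro s
    simp only [hg, hh0, hh1]
    rw [LinearIsometryEquiv.norm_map, harg s, hRi s]
    ring
  have hfull : ∫ s, g s = (ξ i:ℝ)/r * (∫ s, h0f s) + ci * ∫ s, h1f s := by
    rw [← transfer_full R g]
    simp only [hgR]
    rw [integral_add (int_h0.const_mul _) (int_h1.const_mul _),
      integral_const_mul, integral_const_mul]
  -- Step 3 : the second component integrates to zero
  have hint1zero : ∫ s, h1f s = 0 := by
    have h := transfer_full refl2 h1f
    have hodd : ∀ s, h1f (refl2 s) = - h1f s := by
      intro s
      have hnrm : ‖refl2 s‖ = ‖s‖ := refl2.norm_map s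
      have e0 : (refl2 s) 0 = s 0 := by
        rw [hrefl2]; show om 1 0 0 (-1) s 0 = s 0; rw [om_apply0]; ring
      have e1 : (refl2 s) 1 = -(s 1) := by
        rw [hrefl2]; show om 1 0 0 (-1) s 1 = -(s 1); rw [om_apply1]; ring
      simp only [hh1]
      rw [hnrm, e0, e1]
      ring
    simp only [hodd] at h
    rw [integral_neg] at h
    linarith
  -- Step 4 : the full integral of h0f is 4 times its quadrant integral
  have hB1meas : MeasurableSet {s : E2 | s 1 ≤ 0} := measurableSet_le (hcoord 1) measurable_const
  have has2 : ∀ s, h0f (refl2 s) = h0f s := by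
    intro s
    have hnrm : ‖refl2 s‖ = ‖s‖ := refl2.norm_map s
    have e0 : (refl2 s) 0 = s 0 := by
      rw [hrefl2]; show om 1 0 0 (-1) s 0 = s 0; rw [om_apply0]; ring
    simp only [hh0]
    rw [hnrm, e0]
  have hpre2 : refl2 ⁻¹' {s : E2 | 0 ≤ s 1} = {s : E2 | s 1 ≤ 0} := by
    ext s
    simp only [Set.mem_preimage, Set.mem_setOf_eq, hrefl2, oiso_apply, om_apply1]
    constructor <;> intro h <;> linarith
  have hsplitU : ∫ s, h0f s = (∫ s in {s : E2 | 0 ≤ s 1}, h0f s)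
      + ∫ s in {s : E2 | s 1 ≤ 0}, h0f s := by
    rw [← setIntegral_univ (f := h0f),
      show (Set.univ : Set E2) = {s : E2 | 0 ≤ s 1} ∪ {s : E2 | s 1 ≤ 0} by
        ext s
        simp only [Set.mem_union, Set.mem_setOf_eq, Set.mem_univ, true_iff]
        exact (le_total 0 (s 1)).imp id id]
    refine split_lemma hB1meas ?_ int_h0.integrableOn int_h0.integrableOn
    refine measure_mono_null ?_ (null_line 0 1 (Or.inr one_ne_zero))
    intro z hz
    have h3 : z 1 = 0 := le_antisymm hz.2 hz.1
    show (0:ℝ) * z 0 + 1 * z 1 = 0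
    linarith
  have hB1eq : ∫ s in {s : E2 | s 1 ≤ 0}, h0f s = ∫ s in {s : E2 | 0 ≤ s 1}, h0f s := by
    rw [← hpre2]
    exact transfer_set _ _ _ has2
  have hB2meas : MeasurableSet {s : E2 | s 0 ≤ 0 ∧ 0 ≤ s 1} :=
    (measurableSet_le (hcoord 0) measurable_const).inter
      (measurableSet_le measurable_const (hcoord 1))
  have hQunion : quadrant ∪ {s : E2 | s 0 ≤ 0 ∧ 0 ≤ s 1} = {s : E2 | 0 ≤ s 1} := by
    ext s
    simp only [quadrant, Set.mem_union, Set.mem_setOf_eq]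
    constructor
    · rintro (⟨h1, h2⟩ | ⟨h1, h2⟩) <;> exact h2
    · intro h
      rcases le_total 0 (s 0) with h' | h'
      · exact Or.inl ⟨h', h⟩
      · exact Or.inr ⟨h', h⟩
  have hsplitQ : ∫ s in {s : E2 | 0 ≤ s 1}, h0f s = (∫ s in quadrant, h0f s)
      + ∫ s in {s : E2 | s 0 ≤ 0 ∧ 0 ≤ s 1}, h0f s := by
    rw [← hQunion]
    refine split_lemma hB2meas ?_ int_h0.integrableOn int_h0.integrableOn
    refine measure_mono_null ?_ (null_line 1 0 (Or.inl one_ne_zero))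
    intro z hz
    have h3 : z 0 = 0 := le_antisymm hz.2.1 hz.1.1
    show (1:ℝ) * z 0 + 0 * z 1 = 0
    linarith
  have has1 : ∀ s, h0f (refl1 s) = h0f s := by
    intro s
    have hnrm : ‖refl1 s‖ = ‖s‖ := refl1.norm_map s
    have e0 : (refl1 s) 0 = -(s 0) := by
      rw [hrefl1]; show om (-1) 0 0 1 s 0 = -(s 0); rw [om_apply0]; ring
    simp only [hh0]
    rw [hnrm, e0, show r * -(s 0) = -(r * s 0) by ring, Real.sin_neg]
    ring
  have hpre1 : refl1 ⁻¹' quadrant = {s : E2 | s 0 ≤ 0 ∧ 0 ≤ s 1} := by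
    ext s
    simp only [Set.mem_preimage, quadrant, Set.mem_setOf_eq, hrefl1, oiso_apply,
      om_apply0, om_apply1]
    constructor <;> rintro ⟨h1, h2⟩ <;> constructor <;> linarith
  have hB2eq : ∫ s in {s : E2 | s 0 ≤ 0 ∧ 0 ≤ s 1}, h0f s = ∫ s in quadrant, h0f s := by
    rw [← hpre1]
    exact transfer_set _ _ _ has1
  have hquad : ∫ s, h0f s = 4 * ∫ s in quadrant, h0f s := by
    rw [hsplitU, hB1eq, hsplitQ, hB2eq]
    ring
  -- conclusion
  have hsymb : symbIm w δ n ξ i = 2 * ∫ s in halfSp n, g s := by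
    rw [hg]; rfl
  have hbig : bigLambda w δ r = 4 * ∫ s in quadrant, h0f s := by
    rw [hh0]; rfl
  rw [hsymb, hhalf, hfull, hint1zero, hbig, ← hquad]
  field_simp
  ring

end
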